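/- For every integer k ≥ 1 and every even m with 2 ≤ m ≤ 2^k, the element [y, x, …(m−2 copies of x)…, x, y] of G_k lies in the subgroup ⟨[y, x, …(2j−1 copies of x)…, x, y] : m/2 ≤ j ≤ 2^(k-1)⟩. -/

import Mathlib

/-!
The commutators `[y, y_t]` are central of order two, depend only on `t mod 2^k`, and satisfy
`[y, y_{-t}] = [y, y_t]`. So `z^t ↦ [y, y_t]` extends to an additive map `Φ` from the group ring
`𝔽₂[ℤ/2^k]` to the centre that kills the image of `1 + σ`, where `σ` is the antipode `z ↦ z⁻¹`.
Since `[c, x, y_j] = [c, y_j]⁻¹ [c, y_(j-1)]` whenever both factors are central, induction on `d`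
gives `[y, x, …(d)…, x, y_j] = Φ(z^(-j) u^d)` with `u = z - 1`.

In the ring `u^(2^k) = 0`, and for even `d = 2s > 0`
`u^d = z^(-s) u^d - (z^(-s) - 1) u^d`. The first term is `(z + z⁻¹)^s`, a power of a
`σ`-invariant element of the image of `1 + σ`, hence again in that image; the second is a
combination of higher powers of `u`. Downward induction on `d` puts `u^d` in the image of `1 + σ`
plus the span of the odd powers `u^e` with `d ≤ e < 2^k`, and applying `Φ` gives the claim.
-/

open Subgroup

namespace P2G

/-- The commutator `[a,b] = a⁻¹ b⁻¹ a b` (left-normed convention of the paper). -/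
def comm {M : Type*} [Group M] (a b : M) : M := a⁻¹ * b⁻¹ * a * b

def X : FreeGroup (Fin 2) := FreeGroup.of 0
def Y : FreeGroup (Fin 2) := FreeGroup.of 1

/-- `y_j = x^(-j) y x^j` in the free group. -/
def yF (j : ℤ) : FreeGroup (Fin 2) := X ^ (-j) * Y * X ^ j

/-- Relations for `G_k`:
`x^(2^(k+1)) = y^4 = [x^(2^k), y] = [y^2, x] = 1` and
`[y_0,y_i]^2 = [y_0,y_i,x] = [y_0,y_i,y] = 1` for `1 ≤ i ≤ 2^(k-1)`. -/
def rels (k : ℕ) : Set (FreeGroup (Fin 2)) :=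
  {X ^ 2 ^ (k + 1), Y ^ 4, comm (X ^ 2 ^ k) Y, comm (Y ^ 2) X} ∪
    ⋃ i ∈ Set.Icc 1 (2 ^ (k - 1)),
      {comm (yF 0) (yF i) ^ 2, comm (comm (yF 0) (yF i)) X, comm (comm (yF 0) (yF i)) Y}

/-- The group `G_k`, given by the above presentation. -/
abbrev G (k : ℕ) := PresentedGroup (rels k)

/-- The generator `x` of `G_k`. -/
def x (k : ℕ) : G k := PresentedGroup.of 0

/-- The generator `y` of `G_k`. -/
def y (k : ℕ) : G k := PresentedGroup.of 1

/-- `y_j = x^(-j) y x^j` in `G_k`. -/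
def yg (k : ℕ) (j : ℤ) : G k := x k ^ (-j) * y k * x k ^ j

/-- `H_k`, the normal closure of `y` in `G_k`. -/
def Hsub (k : ℕ) : Subgroup (G k) := Subgroup.normalClosure {y k}

/-- `Z_k`, the normal closure in `G_k` of `{x^(2^k), y^2} ∪ {[y_0,y_i] : 1 ≤ i ≤ 2^(k-1)}`. -/
def Zsub (k : ℕ) : Subgroup (G k) :=
  Subgroup.normalClosure ({x k ^ 2 ^ k, y k ^ 2} ∪
    {g | ∃ i : ℕ, 1 ≤ i ∧ i ≤ 2 ^ (k - 1) ∧ g = comm (yg k 0) (yg k i)})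

/-- `G_k^(2^j)`, the subgroup generated by all `2^j`-th powers of elements of `G_k`. -/
def pow2 (k j : ℕ) : Subgroup (G k) := Subgroup.closure (Set.range fun g : G k => g ^ 2 ^ j)

/-- `w = y_(2^k − 1) y_(2^k − 2) ⋯ y_1 y_0` in `G_k`. -/
def w (k : ℕ) : G k := (((List.range (2 ^ k)).reverse).map fun j => yg k j).prod

/-- The left-normed commutator `c k i = [y, x, …(i copies of x)…, x]`; `c k 0 = y`. -/
def c (k : ℕ) : ℕ → G k
  | 0 => y k
  | i + 1 => comm (c k i) (x k)

/-- `γ_m(G_k)`, the `m`-th term of the lower central series (`γ_1 = G_k`). -/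
abbrev gamma (k m : ℕ) : Subgroup (G k) := Subgroup.lowerCentralSeries (⊤ : Subgroup (G k)) (m - 1)

open scoped IsMulCommutative

section Commutator

variable {M : Type*} [Group M]

lemma map_comm {N F : Type*} [Group N] [FunLike F M N] [MonoidHomClass F M N] (f : F) (a b : M) :
    f (comm a b) = comm (f a) (f b) := by
  simp [comm]

lemma comm_inv (a b : M) : (comm a b)⁻¹ = comm b a := by
  unfold comm; group

lemma comm_eq_one_iff {a b : M} : comm a b = 1 ↔ a * b = b * a := by
  rw [show comm a b = (b * a)⁻¹ * (a * b) by unfold comm; group, inv_mul_eq_one, eq_comm]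

lemma conj_comm (g a b : M) : g⁻¹ * comm a b * g = comm (g⁻¹ * a * g) (g⁻¹ * b * g) := by
  unfold comm; group

lemma inv_mul_mul_of_mem_center {z : M} (hz : z ∈ center M) (g : M) : g⁻¹ * z * g = z := by
  rw [mul_assoc, ← mem_center_iff.mp hz g, inv_mul_cancel_left]

lemma comm_comm_of_mem_center {u v w : M} (hP : comm u v ∈ center M)
    (hQ : comm u (w * v * w⁻¹) ∈ center M) :
    comm (comm u w) v = (comm u v)⁻¹ * comm u (w * v * w⁻¹) := by
  have key : comm (comm u w) v = (u⁻¹ * w⁻¹ * u * w)⁻¹ * (comm u v)⁻¹ * (u⁻¹ * w⁻¹ * u * w) *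
      (w⁻¹ * comm u (w * v * w⁻¹) * w) := by
    unfold comm; group
  rw [key, inv_mul_mul_of_mem_center (inv_mem hP), inv_mul_mul_of_mem_center hQ]

end Commutator

lemma two_pow_le_two_mul_two_pow_sub_one (k : ℕ) : 2 ^ k ≤ 2 * 2 ^ (k - 1) := by
  cases k <;> simp [pow_succ, mul_comm]

section Relations

variable (k : ℕ)

lemma mk_X : PresentedGroup.mk (rels k) X = x k := rfl

lemma mk_Y : PresentedGroup.mk (rels k) Y = y k := rfl

lemma comm_x_pow_y : comm (x k ^ 2 ^ k) (y k) = 1 := by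
  have h := PresentedGroup.one_of_mem (rels := rels k) (x := comm (X ^ 2 ^ k) Y) (by simp [rels])
  rwa [map_comm, map_pow, mk_X, mk_Y] at h

lemma yg_zero : yg k 0 = y k := by
  simp [yg]

lemma comm_y_yg_rels {i : ℤ} (h1 : 1 ≤ i) (h2 : i ≤ 2 ^ (k - 1)) :
    comm (y k) (yg k i) ^ 2 = 1 ∧ comm (comm (y k) (yg k i)) (x k) = 1 ∧
      comm (comm (y k) (yg k i)) (y k) = 1 := by
  have hrel : ∀ r ∈ ({comm (yF 0) (yF i) ^ 2, comm (comm (yF 0) (yF i)) X,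
      comm (comm (yF 0) (yF i)) Y} : Set (FreeGroup (Fin 2))), PresentedGroup.mk (rels k) r = 1 :=
    fun r hr => PresentedGroup.one_of_mem (Or.inr (Set.mem_biUnion (Set.mem_Icc.mpr ⟨h1, h2⟩) hr))
  have hyF : ∀ j, PresentedGroup.mk (rels k) (yF j) = yg k j := fun j => by simp [yF, yg]; rfl
  refine ⟨?_, ?_, ?_⟩
  · simpa [map_comm, hyF, yg_zero, mk_X, mk_Y] using hrel _ (Or.inl rfl)
  · simpa [map_comm, hyF, yg_zero, mk_X, mk_Y] using hrel _ (Or.inr (Or.inl rfl))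
  · simpa [map_comm, hyF, yg_zero, mk_X, mk_Y] using hrel _ (Or.inr (Or.inr rfl))

end Relations

section CentralCommutators

variable (k : ℕ)

lemma mem_center_of_commute_x_y {g : G k} (hx : g * x k = x k * g) (hy : g * y k = y k * g) :
    g ∈ center (G k) := by
  rw [mem_center_iff]
  intro h
  have hh : h ∈ centralizer {g} := PresentedGroup.generated_by _ _ (fun i => by
    rw [mem_centralizer_singleton_iff]
    fin_cases i
    exacts [hx.symm, hy.symm]) h
  exact mem_centralizer_singleton_iff.mp hh

lemma x_pow_mem_center : x k ^ 2 ^ k ∈ center (G k) :=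
  mem_center_of_commute_x_y k ((Commute.refl _).pow_left _).eq
    (comm_eq_one_iff.mp (comm_x_pow_y k))

lemma conj_yg (a t : ℤ) : x k ^ (-t) * yg k a * x k ^ t = yg k (a + t) := by
  simp only [yg]; group

lemma yg_eq_of_intCast_eq {a b : ℤ} (h : (a : ZMod (2 ^ k)) = b) : yg k a = yg k b := by
  obtain ⟨q, hq⟩ := (ZMod.intCast_eq_intCast_iff_dvd_sub a b _).mp h
  have hc : x k ^ ((2 ^ k : ℕ) * q : ℤ) ∈ center (G k) := by
    rw [zpow_mul, zpow_natCast]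
    exact zpow_mem (x_pow_mem_center k) q
  rw [show b = a + (2 ^ k : ℕ) * q by linarith, ← conj_yg, zpow_neg, mul_assoc,
    mem_center_iff.mp hc, inv_mul_cancel_left]

lemma comm_y_yg_neg_of_mem_center {j : ℤ} (hj : comm (y k) (yg k j) ∈ center (G k)) :
    comm (y k) (yg k (-j)) = (comm (y k) (yg k j))⁻¹ := by
  have h : x k ^ (-j) * comm (y k) (yg k (-j)) * x k ^ j = (comm (y k) (yg k j))⁻¹ := by
    rw [zpow_neg, conj_comm, ← zpow_neg, ← yg_zero, conj_yg, conj_yg, zero_add, neg_add_cancel,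
      comm_inv]
  calc comm (y k) (yg k (-j))
      = (x k ^ (-j))⁻¹ * (x k ^ (-j) * comm (y k) (yg k (-j)) * x k ^ j) * x k ^ (-j) := by group
    _ = (comm (y k) (yg k j))⁻¹ := by rw [h, inv_mul_mul_of_mem_center (inv_mem hj)]

lemma comm_y_yg_mem_center_and_sq (j : ℤ) :
    comm (y k) (yg k j) ∈ center (G k) ∧ comm (y k) (yg k j) ^ 2 = 1 := by
  have base : ∀ i : ℕ, i ≤ 2 ^ (k - 1) →
      comm (y k) (yg k i) ∈ center (G k) ∧ comm (y k) (yg k i) ^ 2 = 1 := by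
    intro i hi
    rcases Nat.eq_zero_or_pos i with rfl | hpos
    · simp [yg_zero, comm]
    · obtain ⟨hsq, hx, hy⟩ := comm_y_yg_rels k (i := i) (by omega) (by exact_mod_cast hi)
      exact ⟨mem_center_of_commute_x_y k (comm_eq_one_iff.mp hx) (comm_eq_one_iff.mp hy), hsq⟩
  set t : ZMod (2 ^ k) := (j : ZMod (2 ^ k))
  by_cases ht : t.val ≤ 2 ^ (k - 1)
  · rw [yg_eq_of_intCast_eq k (b := t.val) (by simp [t])]
    exact base _ ht
  · have hk := two_pow_le_two_mul_two_pow_sub_one k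
    have hneg : (-t).val ≤ 2 ^ (k - 1) := by rw [ZMod.neg_val]; split_ifs <;> omega
    obtain ⟨hc, hsq⟩ := base _ hneg
    rw [yg_eq_of_intCast_eq k (b := -((-t).val : ℤ)) (by simp [t]),
      comm_y_yg_neg_of_mem_center k hc]
    exact ⟨inv_mem hc, by rw [inv_pow, hsq, inv_one]⟩

lemma comm_y_yg_mem_center (j : ℤ) : comm (y k) (yg k j) ∈ center (G k) :=
  (comm_y_yg_mem_center_and_sq k j).1

lemma comm_y_yg_sq (j : ℤ) : comm (y k) (yg k j) ^ 2 = 1 :=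
  (comm_y_yg_mem_center_and_sq k j).2

lemma comm_y_yg_neg (j : ℤ) : comm (y k) (yg k (-j)) = comm (y k) (yg k j) := by
  rw [comm_y_yg_neg_of_mem_center k (comm_y_yg_mem_center k j),
    inv_eq_of_mul_eq_one_right (by rw [← pow_two, comm_y_yg_sq])]

end CentralCommutators

section GroupRing

variable (k : ℕ)

abbrev R := AddMonoidAlgebra (ZMod 2) (ZMod (2 ^ k))

instance : CharP (R k) 2 := charP_of_injective_algebraMap' (ZMod 2) 2

noncomputable def z (t : ZMod (2 ^ k)) : R k := AddMonoidAlgebra.single t 1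

noncomputable def u : R k := z k 1 - 1

noncomputable def antipode : R k →+* R k :=
  AddMonoidAlgebra.mapDomainRingHom (ZMod 2) negAddMonoidHom

noncomputable def symRange : AddSubgroup (R k) :=
  (AddMonoidHom.id (R k) + (antipode k).toAddMonoidHom).range

noncomputable def oddPowSpan (n : ℕ) : AddSubgroup (R k) :=
  AddSubgroup.closure {r | ∃ d, Odd d ∧ n ≤ d ∧ d < 2 ^ k ∧ r = u k ^ d}

variable {k}

lemma z_add (a b : ZMod (2 ^ k)) : z k (a + b) = z k a * z k b := by
  simp [z, AddMonoidAlgebra.single_mul_single]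

lemma z_zero : z k 0 = 1 := rfl

lemma z_pow (t : ZMod (2 ^ k)) (n : ℕ) : z k t ^ n = z k (n • t) := by
  simp [z, AddMonoidAlgebra.single_pow]

lemma z_eq_z_one_pow_val (t : ZMod (2 ^ k)) : z k t = z k 1 ^ t.val := by
  rw [z_pow, nsmul_one, ZMod.natCast_zmod_val]

lemma antipode_z (t : ZMod (2 ^ k)) : antipode k (z k t) = z k (-t) := by
  simp [antipode, z]

lemma u_pow_eq_zero {d : ℕ} (hd : 2 ^ k ≤ d) : u k ^ d = 0 := by
  obtain ⟨e, rfl⟩ := Nat.exists_eq_add_of_le hd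
  rw [pow_add, u, sub_pow_char_pow, one_pow, z_pow, nsmul_one, ZMod.natCast_self, z_zero, sub_self,
    zero_mul]

lemma z_sub_one (t : ZMod (2 ^ k)) : z k t - 1 = (∑ i ∈ Finset.range t.val, z k 1 ^ i) * u k := by
  rw [u, geom_sum_mul, ← z_eq_z_one_pow_val]

lemma z_one_pow_mul_u_pow_mem {S : AddSubgroup (R k)} {d : ℕ} (hS : ∀ e, d ≤ e → u k ^ e ∈ S)
    (n : ℕ) : z k 1 ^ n * u k ^ d ∈ S := by
  induction n generalizing d with
  | zero => simpa using hS d le_rfl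
  | succ n ih =>
    have h : z k 1 ^ (n + 1) * u k ^ d = z k 1 ^ n * u k ^ (d + 1) + z k 1 ^ n * u k ^ d := by
      rw [u]; ring
    rw [h]
    exact add_mem (ih fun e he => hS e (by omega)) (ih hS)

lemma z_neg_mul_u_pow_mem_symRange (s : ℕ) :
    z k (-(s + 1 : ℕ)) * u k ^ (2 * (s + 1)) ∈ symRange k := by
  set v := z k 1 + z k (-1)
  have hv : antipode k v = v := by simp [v, antipode_z, add_comm]
  have hz : z k (-1) * z k 1 = 1 := by rw [← z_add, neg_add_cancel, z_zero]
  have hu : z k (-1) * u k ^ 2 = v := by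
    rw [u]; linear_combination (z k 1 - 2) * hz - CharTwo.two_eq_zero (R := R k)
  have hpow : z k (-(s + 1 : ℕ)) * u k ^ (2 * (s + 1)) = v ^ (s + 1) := by
    rw [← hu, mul_pow, z_pow, pow_mul, nsmul_eq_mul, mul_neg, mul_one]
  rw [hpow]
  exact ⟨v ^ s * z k 1, by simp [hv, antipode_z, v]; ring⟩

lemma u_pow_mem_symRange_sup_oddPowSpan {n d : ℕ} (hn : 1 ≤ n) (hd : n ≤ d) :
    u k ^ d ∈ symRange k ⊔ oddPowSpan k n := by
  induction hN : 2 ^ k - d using Nat.strong_induction_on generalizing d with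
  | _ N ih =>
  by_cases hbig : 2 ^ k ≤ d
  · rw [u_pow_eq_zero hbig]
    exact zero_mem _
  have higher : ∀ e, d + 1 ≤ e → u k ^ e ∈ symRange k ⊔ oddPowSpan k n :=
    fun e he => ih (2 ^ k - e) (by omega) (by omega) rfl
  rcases Nat.even_or_odd d with ⟨s, rfl⟩ | hodd
  · obtain ⟨s, rfl⟩ : ∃ s', s = s' + 1 := ⟨s - 1, by omega⟩
    set t : ZMod (2 ^ k) := -((s + 1 : ℕ) : ZMod (2 ^ k))
    have hsplit : u k ^ (s + 1 + (s + 1)) = z k t * u k ^ (2 * (s + 1)) -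
        ∑ i ∈ Finset.range t.val, z k 1 ^ i * u k ^ (s + 1 + (s + 1) + 1) := by
      rw [← Finset.sum_mul]
      linear_combination (-(u k ^ (s + 1 + (s + 1)))) * z_sub_one t
    rw [hsplit]
    exact sub_mem (AddSubgroup.mem_sup_left (z_neg_mul_u_pow_mem_symRange s))
      (sum_mem fun i _ => z_one_pow_mul_u_pow_mem higher i)
  · exact AddSubgroup.mem_sup_right (AddSubgroup.subset_closure ⟨d, hodd, hd, by omega, rfl⟩)

end GroupRing

section CommHom

variable (k : ℕ)

noncomputable def centralComm (t : ZMod (2 ^ k)) : center (G k) :=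
  ⟨comm (y k) (yg k t.val), comm_y_yg_mem_center k _⟩

noncomputable def centralCommHom (t : ZMod (2 ^ k)) : ZMod 2 →+ Additive (center (G k)) :=
  ZMod.lift 2 ⟨zmultiplesHom _ (.ofMul (centralComm k t)), by
    rw [zmultiplesHom_apply, ← ofMul_zpow]
    exact congrArg Additive.ofMul (Subtype.ext (comm_y_yg_sq k _))⟩

noncomputable def commHom : R k →+ Additive (center (G k)) :=
  (Finsupp.liftAddHom (centralCommHom k)).comp AddMonoidAlgebra.coeffAddEquiv.toAddMonoidHom

variable {k}

lemma commHom_single (t : ZMod (2 ^ k)) (r : ZMod 2) :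
    commHom k (AddMonoidAlgebra.single t r) = centralCommHom k t r :=
  Finsupp.liftAddHom_apply_single _ t r

lemma commHom_z (t : ZMod (2 ^ k)) : (commHom k (z k t)).toMul = centralComm k t := by
  rw [z, commHom_single, centralCommHom, ← Int.cast_one, ZMod.lift_coe, zmultiplesHom_apply,
    one_zsmul, toMul_ofMul]

lemma centralComm_intCast (j : ℤ) : (centralComm k j : G k) = comm (y k) (yg k j) :=
  congrArg (comm (y k)) (yg_eq_of_intCast_eq k (by simp))

lemma centralComm_neg (t : ZMod (2 ^ k)) : centralComm k (-t) = centralComm k t := by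
  have ht : t = ((t.val : ℤ) : ZMod (2 ^ k)) := by simp
  ext
  rw [ht, ← Int.cast_neg, centralComm_intCast, centralComm_intCast, comm_y_yg_neg]

lemma commHom_antipode (r : R k) : commHom k (antipode k r) = commHom k r := by
  have h : (commHom k).comp (antipode k).toAddMonoidHom = commHom k :=
    AddMonoidAlgebra.addMonoidHom_ext fun t a => by
      simp [antipode, commHom_single, centralCommHom, centralComm_neg]
  exact DFunLike.congr_fun h r

lemma commHom_eq_zero_of_mem_symRange {r : R k} (hr : r ∈ symRange k) : commHom k r = 0 := by
  obtain ⟨a, rfl⟩ := hr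
  show commHom k (a + antipode k a) = 0
  rw [map_add, commHom_antipode, ← map_add, CharTwo.add_self_eq_zero, map_zero]

lemma comm_c_yg (d : ℕ) (j : ℤ) :
    comm (c k d) (yg k j) = (commHom k (z k (-j) * u k ^ d)).toMul := by
  induction d generalizing j with
  | zero =>
    rw [pow_zero, mul_one, commHom_z, ← Int.cast_neg, centralComm_intCast, comm_y_yg_neg]
    rfl
  | succ d ih =>
    have hx : x k * yg k j * (x k)⁻¹ = yg k (j - 1) := by
      simpa [sub_eq_add_neg] using conj_yg k j (-1)
    have hcen : ∀ i, comm (c k d) (yg k i) ∈ center (G k) := fun i => by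
      rw [ih]; exact SetLike.coe_mem _
    rw [c, comm_comm_of_mem_center (hcen j) (hx ▸ hcen (j - 1)), hx, ih, ih, ← coe_inv, ← coe_mul,
      ← toMul_neg, ← toMul_add, ← map_neg, ← map_add]
    congr 3
    rw [u, Int.cast_sub, Int.cast_one, neg_sub, show (1 : ZMod (2 ^ k)) - j = -j + 1 by ring, z_add]
    ring

lemma comm_c_y (d : ℕ) : comm (c k d) (y k) = (commHom k (u k ^ d)).toMul := by
  rw [← yg_zero, comm_c_yg, Int.cast_zero, neg_zero, z_zero, one_mul]

lemma comm_c_y_mem_closure (d : ℕ) :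
    comm (c k d) (y k) ∈
      closure {g | ∃ e, Odd e ∧ d ≤ e ∧ e < 2 ^ k ∧ g = comm (c k e) (y k)} := by
  rcases Nat.eq_zero_or_pos d with rfl | hd
  · rw [show comm (c k 0) (y k) = 1 by simp [c, comm]]
    exact one_mem _
  set H := closure {g | ∃ e, Odd e ∧ d ≤ e ∧ e < 2 ^ k ∧ g = comm (c k e) (y k)}
  have hle : symRange k ⊔ oddPowSpan k d ≤
      ((H.subgroupOf (center (G k))).toAddSubgroup).comap (commHom k) := by
    refine sup_le (fun r hr => ?_) ((AddSubgroup.closure_le _).2 ?_)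
    · simp [commHom_eq_zero_of_mem_symRange hr]
    · rintro _ ⟨e, he, hde, hlt, rfl⟩
      simp only [SetLike.mem_coe, AddSubgroup.mem_comap, Additive.mem_toAddSubgroup, mem_subgroupOf,
        ← comm_c_y]
      exact subset_closure ⟨e, he, hde, hlt, rfl⟩
  have h := hle (u_pow_mem_symRange_sup_oddPowSpan hd le_rfl)
  simp only [AddSubgroup.mem_comap, Additive.mem_toAddSubgroup, mem_subgroupOf, ← comm_c_y] at h
  exact h

end CommHom

theorem stmt13_general (k : ℕ) (m : ℕ) :
    comm (c k (m - 2)) (y k) ∈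
      Subgroup.closure
        {g | ∃ j : ℕ, m / 2 ≤ j ∧ j ≤ 2 ^ (k - 1) ∧ g = comm (c k (2 * j - 1)) (y k)} := by
  have hk := two_pow_le_two_mul_two_pow_sub_one k
  refine closure_mono ?_ (comm_c_y_mem_closure (m - 2))
  rintro _ ⟨_, ⟨j, rfl⟩, hle, hlt, rfl⟩
  exact ⟨j + 1, by omega, by omega, by rw [show 2 * (j + 1) - 1 = 2 * j + 1 by omega]⟩

/-- For every `k ≥ 1` and every even `m` with `2 ≤ m ≤ 2^k`, the element
`[y,x,…(m−2)…,x,y]` lies in `⟨[y,x,…(2j−1)…,x,y] : m/2 ≤ j ≤ 2^(k-1)⟩`. -/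
theorem stmt13 (k : ℕ) (hk : 1 ≤ k) (m : ℕ) (h2 : 2 ≤ m) (hm : m ≤ 2 ^ k)
    (hev : m % 2 = 0) :
    comm (c k (m - 2)) (y k) ∈
      Subgroup.closure
        {g | ∃ j : ℕ, m / 2 ≤ j ∧ j ≤ 2 ^ (k - 1) ∧ g = comm (c k (2 * j - 1)) (y k)} :=
  stmt13_general k m

end P2G
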